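/- Completeness of the parameter estimation test: if the tolerance is set to δ^tol_PE = 2√(log(n/ε_c)·Σᵢ γᵢcᵢ²/n) + (3D/n)·log(2/ε_c) with the quantities γᵢ, cᵢ, D computed from the honest distribution p₀ and the affine coefficients of f^PE, then in an honest i.i.d. implementation, the probability that |f^PE(freq_{c₁ⁿ}) − f^PE(p₀)| > δ^tol_PE is at most ε_c; hence the probability of aborting at parameter estimation is at most ε_c. -/

import Mathlib

open Finset

noncomputable section

open scoped Classical in
/-- Probability of an event for `n` i.i.d. samples from a distribution on a finite
alphabet. -/
noncomputable def iidPr {K n : ℕ} (π : Fin (K + 1) → ℝ)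
    (A : (Fin n → Fin (K + 1)) → Prop) : ℝ :=
  ∑ ω ∈ Finset.univ.filter (fun ω => A ω), ∏ i, π (ω i)

/-- Empirical frequency of symbol `c` among the samples `ω`. -/
noncomputable def freq {K n : ℕ} (ω : Fin n → Fin (K + 1)) (c : Fin (K + 1)) : ℝ :=
  (Finset.univ.filter (fun j => ω j = c)).card / (n : ℝ)

/-- `γᵢ = πᵢ(1 − Σ_{j≤i}πⱼ)/(1 − Σ_{j<i}πⱼ)`. -/
noncomputable def gammaCoef {K : ℕ} (π : Fin (K + 1) → ℝ) (i : Fin K) : ℝ :=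
  π i.castSucc * (1 - ∑ j ∈ Finset.univ.filter (fun j => j ≤ i.castSucc), π j) /
    (1 - ∑ j ∈ Finset.univ.filter (fun j => j < i.castSucc), π j)

/-- `cᵢ = hᵢ − (Σ_{j>i} hⱼπⱼ)/(1 − Σ_{j≤i}πⱼ)`. -/
noncomputable def cCoef {K : ℕ} (π h : Fin (K + 1) → ℝ) (i : Fin K) : ℝ :=
  h i.castSucc - (∑ j ∈ Finset.univ.filter (fun j => i.castSucc < j), h j * π j) /
    (1 - ∑ j ∈ Finset.univ.filter (fun j => j ≤ i.castSucc), π j)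

/-- `D = max_{i,j}|hᵢ − hⱼ|`. -/
noncomputable def Dspread {K : ℕ} (h : Fin (K + 1) → ℝ) : ℝ :=
  Finset.univ.sup' Finset.univ_nonempty
    (fun p : Fin (K + 1) × Fin (K + 1) => |h p.1 - h p.2|)

/-- The affine parameter-estimation statistic `f^PE(p) = Σ_a h_a p(a)`. -/
noncomputable def fPE {K : ℕ} (h : Fin (K + 1) → ℝ) (p : Fin (K + 1) → ℝ) : ℝ :=
  ∑ a, h a * p a

/-- The tolerance parameter
`δ^tol_PE = 2√(log(n/ε_c)·Σᵢ γᵢcᵢ²/n) + (3D/n)·log(2/ε_c)`. -/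
noncomputable def deltaTolPE {K : ℕ} (n : ℕ) (p0 h : Fin (K + 1) → ℝ) (εc : ℝ) : ℝ :=
  2 * Real.sqrt (Real.logb 2 ((n : ℝ) / εc) *
      ∑ i : Fin K, gammaCoef p0 i * (cCoef p0 h i) ^ 2 / (n : ℝ)) +
    (3 * Dspread h / (n : ℝ)) * Real.logb 2 (2 / εc)

/-!
With `X = h - f^PE(p₀)`, the deviation `f^PE(freq) - f^PE(p₀)` is the empirical mean of the
i.i.d. centred values `X(ωⱼ)`, which are bounded by `D` in absolute value and have variance
`v = Σᵢ γᵢ cᵢ²`: the `γᵢ, cᵢ` split the variance along the successive tails `{j ≥ i}` of the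
alphabet, and the splitting telescopes. Bernstein's inequality, from the exponential moment
bound `𝔼 e^{θX} ≤ e^{θ² v}` for `θX ≤ 1`, bounds each one-sided tail by `ε_c / 2` as soon as
`nδ² ≥ 4 v log(2/ε_c)` and `nδ ≥ 2 D log(2/ε_c)`, and the two summands of `δ^tol_PE` provide
exactly this (using `log ≤ log₂`) when `n ≥ 2`. Otherwise `δ^tol_PE ≥ D` and the deviation event
is empty. The abort event is contained in the deviation event.
-/

namespace Real

theorem exp_le_one_add_add_sq {x : ℝ} (hx : x ≤ 1) : exp x ≤ 1 + x + x ^ 2 := by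
  rcases le_or_gt (-1) x with hx' | hx'
  · have := abs_exp_sub_one_sub_id_le (abs_le.mpr ⟨hx', hx⟩)
    linarith [le_abs_self (exp x - 1 - x)]
  · nlinarith [exp_lt_one_iff.mpr (hx'.trans neg_one_lt_zero)]

theorem log_le_logb_two {x : ℝ} (hx : 1 ≤ x) : log x ≤ logb 2 x := by
  rw [← log_div_log, le_div_iff₀ (log_pos one_lt_two)]
  exact mul_le_of_le_one_right (log_nonneg hx) (log_two_lt_d9.le.trans (by norm_num))

end Real

section IidPr

variable {K n : ℕ} {π : Fin (K + 1) → ℝ}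

open scoped Classical in
theorem iidPr_eq_sum_ite (A : (Fin n → Fin (K + 1)) → Prop) :
    iidPr π A = ∑ ω, if A ω then ∏ i, π (ω i) else 0 := by
  rw [iidPr, sum_filter]

theorem iidPr_mono (hπ : ∀ a, 0 ≤ π a) {A B : (Fin n → Fin (K + 1)) → Prop}
    (hAB : ∀ ω, A ω → B ω) : iidPr π A ≤ iidPr π B := by
  classical
  simp only [iidPr_eq_sum_ite]
  refine sum_le_sum fun ω _ => ?_
  have := prod_nonneg fun i (_ : i ∈ univ) => hπ (ω i)
  split_ifs <;> simp_all

theorem iidPr_of_forall_not {A : (Fin n → Fin (K + 1)) → Prop}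
    (hA : ∀ ω, ¬ A ω) : iidPr π A = 0 := by
  classical
  simp [iidPr_eq_sum_ite, hA]

theorem iidPr_or_le (hπ : ∀ a, 0 ≤ π a) (A B : (Fin n → Fin (K + 1)) → Prop) :
    iidPr π (fun ω => A ω ∨ B ω) ≤ iidPr π A + iidPr π B := by
  classical
  simp only [iidPr_eq_sum_ite, ← sum_add_distrib]
  refine sum_le_sum fun ω _ => ?_
  have := prod_nonneg fun i (_ : i ∈ univ) => hπ (ω i)
  split_ifs <;> simp_all

/-- Chernoff's bound: the exponential moment of a sum of i.i.d. terms factorises. -/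
theorem iidPr_lt_sum_le (hπ : ∀ a, 0 ≤ π a) (X : Fin (K + 1) → ℝ) (t : ℝ) {θ : ℝ}
    (hθ : 0 ≤ θ) :
    iidPr π (fun ω : Fin n → Fin (K + 1) => t < ∑ j, X (ω j)) ≤
      Real.exp (-(θ * t)) * (∑ a, π a * Real.exp (θ * X a)) ^ n := by
  classical
  rw [iidPr_eq_sum_ite, Fintype.sum_pow, mul_sum]
  refine sum_le_sum fun ω _ => ?_
  have hprod := prod_nonneg fun i (_ : i ∈ univ) => hπ (ω i)
  have hrw : Real.exp (-(θ * t)) * ∏ i, π (ω i) * Real.exp (θ * X (ω i)) =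
      (∏ i, π (ω i)) * Real.exp (θ * (∑ j, X (ω j) - t)) := by
    rw [prod_mul_distrib, ← Real.exp_sum, mul_left_comm, ← Real.exp_add, ← mul_sum]
    ring_nf
  rw [hrw]
  split_ifs with ht
  · exact le_mul_of_one_le_right hprod (Real.one_le_exp (by nlinarith))
  · positivity

theorem sum_mul_exp_le_exp_mul_variance (hπ : ∀ a, 0 ≤ π a) (hπ1 : ∑ a, π a = 1)
    {X : Fin (K + 1) → ℝ} (hX : ∑ a, π a * X a = 0) {θ : ℝ} (hθX : ∀ a, θ * X a ≤ 1) :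
    ∑ a, π a * Real.exp (θ * X a) ≤ Real.exp (θ ^ 2 * ∑ a, π a * X a ^ 2) :=
  calc ∑ a, π a * Real.exp (θ * X a)
      ≤ ∑ a, (π a + θ * (π a * X a) + θ ^ 2 * (π a * X a ^ 2)) :=
        sum_le_sum fun a _ => by
          nlinarith [mul_le_mul_of_nonneg_left (Real.exp_le_one_add_add_sq (hθX a)) (hπ a)]
    _ = 1 + θ ^ 2 * ∑ a, π a * X a ^ 2 := by
        rw [sum_add_distrib, sum_add_distrib, ← mul_sum, ← mul_sum,
          hπ1, hX, mul_zero, add_zero]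
    _ ≤ Real.exp (θ ^ 2 * ∑ a, π a * X a ^ 2) := by
        linarith [Real.add_one_le_exp (θ ^ 2 * ∑ a, π a * X a ^ 2)]

theorem iidPr_lt_sum_le_exp (hπ : ∀ a, 0 ≤ π a) (hπ1 : ∑ a, π a = 1)
    {X : Fin (K + 1) → ℝ} (hX : ∑ a, π a * X a = 0) {θ : ℝ} (hθ : 0 ≤ θ)
    (hθX : ∀ a, θ * X a ≤ 1) (δ : ℝ) :
    iidPr π (fun ω : Fin n → Fin (K + 1) => n * δ < ∑ j, X (ω j)) ≤
      Real.exp (n * (θ ^ 2 * ∑ a, π a * X a ^ 2 - θ * δ)) :=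
  calc _ ≤ Real.exp (-(θ * (n * δ))) * (∑ a, π a * Real.exp (θ * X a)) ^ n :=
        iidPr_lt_sum_le hπ X _ hθ
    _ ≤ Real.exp (-(θ * (n * δ))) * Real.exp (θ ^ 2 * ∑ a, π a * X a ^ 2) ^ n := by
        gcongr
        · exact sum_nonneg fun a _ => mul_nonneg (hπ a) (Real.exp_pos _).le
        · exact sum_mul_exp_le_exp_mul_variance hπ hπ1 hX hθX
    _ = Real.exp (n * (θ ^ 2 * ∑ a, π a * X a ^ 2 - θ * δ)) := by
        rw [← Real.exp_nat_mul, ← Real.exp_add]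
        ring_nf

/-- Bernstein's inequality, in the form `Pr[Σ Xⱼ > nδ] ≤ e^{-E}` for centred summands
bounded above by `D`, obtained from the exponential moment at `θ = δ/(2v)` or `θ = 1/D`. -/
theorem iidPr_lt_sum_le_exp_neg (hπ : ∀ a, 0 ≤ π a) (hπ1 : ∑ a, π a = 1)
    {X : Fin (K + 1) → ℝ} (hX : ∑ a, π a * X a = 0) {D δ E : ℝ} (hD : 0 < D) (hE : 0 < E)
    (hXD : ∀ a, X a ≤ D) (hvar : 4 * E * ∑ a, π a * X a ^ 2 ≤ n * δ ^ 2)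
    (hlin : 2 * E * D ≤ n * δ) :
    iidPr π (fun ω : Fin n → Fin (K + 1) => n * δ < ∑ j, X (ω j)) ≤ Real.exp (-E) := by
  have hδ : 0 < δ := pos_of_mul_pos_right ((by positivity : 0 < 2 * E * D).trans_le hlin)
    n.cast_nonneg
  set v := ∑ a, π a * X a ^ 2
  rcases le_or_gt (D * δ) (2 * v) with hsmall | hlarge
  · have hv : 0 < v := by nlinarith
    have hθX : ∀ a, δ / (2 * v) * X a ≤ 1 := fun a => by
      rw [div_mul_eq_mul_div, div_le_one (by positivity)]
      nlinarith [hXD a]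
    refine (iidPr_lt_sum_le_exp hπ hπ1 hX (by positivity) hθX δ).trans (Real.exp_le_exp.mpr ?_)
    have hEδ : E ≤ n * δ ^ 2 / (4 * v) := by rw [le_div_iff₀ (by positivity)]; linarith
    have heq : n * ((δ / (2 * v)) ^ 2 * v - δ / (2 * v) * δ) = -(n * δ ^ 2 / (4 * v)) := by
      field_simp; ring
    linarith
  · have hθX : ∀ a, 1 / D * X a ≤ 1 := fun a => by
      rw [one_div_mul_eq_div, div_le_one hD]; exact hXD a
    refine (iidPr_lt_sum_le_exp hπ hπ1 hX (by positivity) hθX δ).trans (Real.exp_le_exp.mpr ?_)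
    have hEδ : E ≤ n * δ / (2 * D) := by rw [le_div_iff₀ (by positivity)]; linarith
    have hle : n * ((1 / D) ^ 2 * v - 1 / D * δ) ≤ -(n * δ / (2 * D)) := by
      have : (1 / D) ^ 2 * v - 1 / D * δ ≤ -(δ / (2 * D)) := by
        rw [div_pow, one_pow, ← sub_nonpos]
        field_simp
        nlinarith
      calc n * ((1 / D) ^ 2 * v - 1 / D * δ) ≤ n * -(δ / (2 * D)) :=
            mul_le_mul_of_nonneg_left this n.cast_nonneg
        _ = -(n * δ / (2 * D)) := by ring
    linarith

theorem iidPr_lt_abs_sum_le (hπ : ∀ a, 0 ≤ π a) (hπ1 : ∑ a, π a = 1)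
    {X : Fin (K + 1) → ℝ} (hX : ∑ a, π a * X a = 0) {D δ E : ℝ} (hD : 0 < D) (hE : 0 < E)
    (hXD : ∀ a, |X a| ≤ D) (hvar : 4 * E * ∑ a, π a * X a ^ 2 ≤ n * δ ^ 2)
    (hlin : 2 * E * D ≤ n * δ) :
    iidPr π (fun ω : Fin n → Fin (K + 1) => n * δ < |∑ j, X (ω j)|) ≤ 2 * Real.exp (-E) := by
  have hnegX : ∑ a, π a * -X a = 0 := by simp [hX]
  have hnegvar : ∑ a, π a * (-X a) ^ 2 = ∑ a, π a * X a ^ 2 := by simp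
  calc _ ≤ iidPr π (fun ω : Fin n → Fin (K + 1) =>
          n * δ < ∑ j, X (ω j) ∨ n * δ < ∑ j, -X (ω j)) :=
        iidPr_mono hπ fun ω hω => by
          rw [sum_neg_distrib]; exact lt_abs.mp hω
    _ ≤ _ := iidPr_or_le hπ _ _
    _ ≤ Real.exp (-E) + Real.exp (-E) := by
        gcongr
        · exact iidPr_lt_sum_le_exp_neg hπ hπ1 hX hD hE (fun a => (abs_le.mp (hXD a)).2) hvar
            hlin
        · exact iidPr_lt_sum_le_exp_neg hπ hπ1 hnegX hD hE
            (fun a => by linarith [(abs_le.mp (hXD a)).1]) (hnegvar ▸ hvar) hlin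
    _ = 2 * Real.exp (-E) := by ring

end IidPr

section TailSum

variable {N : ℕ}

def tailSum (f : Fin N → ℝ) (m : ℕ) : ℝ :=
  ∑ j ∈ univ.filter (fun j : Fin N => m ≤ (j : ℕ)), f j

theorem tailSum_zero (f : Fin N → ℝ) : tailSum f 0 = ∑ j, f j := by
  simp [tailSum]

theorem tailSum_of_le (f : Fin N → ℝ) {m : ℕ} (hm : N ≤ m) : tailSum f m = 0 :=
  sum_eq_zero fun j hj => absurd ((mem_filter.mp hj).2) (by omega)

theorem tailSum_eq_add_tailSum_succ (f : Fin N → ℝ) (i : Fin N) :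
    tailSum f i = f i + tailSum f (i + 1) := by
  have : univ.filter (fun j : Fin N => (i : ℕ) ≤ j) =
      insert i (univ.filter (fun j : Fin N => (i : ℕ) + 1 ≤ j)) := by
    ext j; simp [Fin.ext_iff]; omega
  rw [tailSum, this, sum_insert (by simp)]
  rfl

theorem sum_filter_lt_add_tailSum (f : Fin N → ℝ) (m : ℕ) :
    ∑ j ∈ univ.filter (fun j : Fin N => (j : ℕ) < m), f j + tailSum f m = ∑ j, f j := by
  rw [tailSum, ← sum_filter_add_sum_filter_not univ (fun j : Fin N => (j : ℕ) < m)]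
  simp only [not_lt]

theorem tailSum_nonneg {f : Fin N → ℝ} (hf : ∀ j, 0 ≤ f j) (m : ℕ) : 0 ≤ tailSum f m :=
  sum_nonneg fun j _ => hf j

theorem tailSum_mul_eq_zero {π : Fin N → ℝ} (hπ : ∀ j, 0 ≤ π j) (h : Fin N → ℝ) {m : ℕ}
    (hm : tailSum π m = 0) : tailSum (fun j => h j * π j) m = 0 :=
  sum_eq_zero fun j hj => by
    rw [(sum_eq_zero_iff_of_nonneg fun j _ => hπ j).mp hm j hj, mul_zero]

theorem sum_lt_eq_one_sub_tailSum {π : Fin N → ℝ} (hπ1 : ∑ j, π j = 1) (i : Fin N) :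
    ∑ j ∈ univ.filter (fun j => j < i), π j = 1 - tailSum π i := by
  rw [← hπ1, ← sum_filter_lt_add_tailSum π i, add_sub_cancel_right]
  rfl

theorem sum_le_eq_one_sub_tailSum_succ {π : Fin N → ℝ} (hπ1 : ∑ j, π j = 1) (i : Fin N) :
    ∑ j ∈ univ.filter (fun j => j ≤ i), π j = 1 - tailSum π (i + 1) := by
  rw [← hπ1, ← sum_filter_lt_add_tailSum π (i + 1), add_sub_cancel_right]
  exact sum_congr (filter_congr fun j _ => Nat.lt_succ_iff.symm) fun _ _ => rfl

theorem sum_gt_eq_tailSum_succ (f : Fin N → ℝ) (i : Fin N) :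
    ∑ j ∈ univ.filter (fun j => i < j), f j = tailSum f (i + 1) :=
  rfl

end TailSum

/-- The between-group term of the law of total variance for two groups, of masses `a` and `r`
and means `b` and `t / r`. -/
theorem two_group_between_variance {a b r t : ℝ} (ha : 0 ≤ a) (hr : 0 ≤ r)
    (ht : r = 0 → t = 0) :
    a * r / (a + r) * (b - t / r) ^ 2 = b ^ 2 * a + (t ^ 2 / r - (b * a + t) ^ 2 / (a + r)) := by
  rcases hr.eq_or_lt with rfl | hr
  · rw [ht rfl]
    rcases ha.eq_or_lt with rfl | ha
    · simp
    · field_simp; ring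
  · field_simp; ring

section Variance

variable {K : ℕ} {π : Fin (K + 1) → ℝ}

/-- The tail mass times the squared mean of `h` on the tail `{j ≥ m}`. -/
def tailMassMeanSq (π h : Fin (K + 1) → ℝ) (m : ℕ) : ℝ :=
  tailSum (fun j => h j * π j) m ^ 2 / tailSum π m

theorem gammaCoef_mul_cCoef_sq (hπ : ∀ a, 0 ≤ π a) (hπ1 : ∑ a, π a = 1)
    (h : Fin (K + 1) → ℝ) (i : Fin K) :
    gammaCoef π i * cCoef π h i ^ 2 = h i.castSucc ^ 2 * π i.castSucc +
      (tailMassMeanSq π h (i + 1) - tailMassMeanSq π h i) := by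
  have hi := tailSum_eq_add_tailSum_succ π i.castSucc
  have hhi := tailSum_eq_add_tailSum_succ (fun j => h j * π j) i.castSucc
  simp only [Fin.val_castSucc] at hi hhi
  rw [gammaCoef, cCoef, tailMassMeanSq, tailMassMeanSq, sum_le_eq_one_sub_tailSum_succ hπ1,
    sum_lt_eq_one_sub_tailSum hπ1, sum_gt_eq_tailSum_succ, sub_sub_cancel, sub_sub_cancel,
    Fin.val_castSucc, hi, hhi]
  exact two_group_between_variance (hπ _) (tailSum_nonneg hπ _) (tailSum_mul_eq_zero hπ h)

theorem sum_gammaCoef_mul_cCoef_sq (hπ : ∀ a, 0 ≤ π a) (hπ1 : ∑ a, π a = 1)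
    (h : Fin (K + 1) → ℝ) :
    ∑ i, gammaCoef π i * cCoef π h i ^ 2 = ∑ a, π a * (h a - fPE h π) ^ 2 := by
  have htelescope : ∑ i : Fin K, (tailMassMeanSq π h (i + 1) - tailMassMeanSq π h i) =
      tailMassMeanSq π h K - tailMassMeanSq π h 0 :=
    (Fin.sum_univ_eq_sum_range (fun m => tailMassMeanSq π h (m + 1) - tailMassMeanSq π h m)
      K).trans (sum_range_sub _ K)
  have hlast : tailMassMeanSq π h K = h (Fin.last K) ^ 2 * π (Fin.last K) := by
    have hK := tailSum_eq_add_tailSum_succ π (Fin.last K)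
    have hhK := tailSum_eq_add_tailSum_succ (fun j => h j * π j) (Fin.last K)
    simp only [Fin.val_last, tailSum_of_le _ le_rfl, add_zero] at hK hhK
    rw [tailMassMeanSq, hK, hhK]
    rcases eq_or_ne (π (Fin.last K)) 0 with h0 | h0
    · simp [h0]
    · field_simp
  have hzero : tailMassMeanSq π h 0 = fPE h π ^ 2 := by
    rw [tailMassMeanSq, tailSum_zero, tailSum_zero, hπ1, div_one, fPE]
  have hvar : ∑ a, π a * (h a - fPE h π) ^ 2 = ∑ a, h a ^ 2 * π a - fPE h π ^ 2 := by
    have : ∀ a, π a * (h a - fPE h π) ^ 2 =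
        h a ^ 2 * π a - 2 * fPE h π * (h a * π a) + fPE h π ^ 2 * π a := fun a => by ring
    have hμ : ∑ a, h a * π a = fPE h π := rfl
    simp only [this, sum_add_distrib, sum_sub_distrib, ← mul_sum, hπ1, hμ]
    ring
  simp only [gammaCoef_mul_cCoef_sq hπ hπ1, sum_add_distrib, htelescope, hlast, hzero,
    hvar]
  rw [Fin.sum_univ_castSucc (fun a => h a ^ 2 * π a)]
  ring

end Variance

section Statistic

variable {K : ℕ}

theorem abs_sub_le_Dspread (h : Fin (K + 1) → ℝ) (a b : Fin (K + 1)) :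
    |h a - h b| ≤ Dspread h :=
  le_sup' (fun p : Fin (K + 1) × Fin (K + 1) => |h p.1 - h p.2|) (mem_univ (a, b))

theorem Dspread_nonneg (h : Fin (K + 1) → ℝ) : 0 ≤ Dspread h :=
  (abs_nonneg _).trans (abs_sub_le_Dspread h 0 0)

theorem abs_fPE_sub_fPE_le_Dspread (h : Fin (K + 1) → ℝ) {p q : Fin (K + 1) → ℝ}
    (hq : ∀ a, 0 ≤ q a) (hq1 : ∑ a, q a = 1) (hp : ∀ b, 0 ≤ p b) (hp1 : ∑ b, p b = 1) :
    |fPE h q - fPE h p| ≤ Dspread h := by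
  have hsplit : fPE h q - fPE h p = ∑ a, ∑ b, q a * p b * (h a - h b) := by
    have : ∑ a, ∑ b, q a * p b * (h a - h b) =
        (∑ a, h a * q a) * ∑ b, p b - (∑ a, q a) * ∑ b, h b * p b := by
      simp only [sum_mul_sum, ← sum_sub_distrib]
      exact sum_congr rfl fun a _ => sum_congr rfl fun b _ => by ring
    rw [this, hp1, hq1, mul_one, one_mul, fPE, fPE]
  calc |fPE h q - fPE h p| ≤ ∑ a, ∑ b, |q a * p b * (h a - h b)| := by
        rw [hsplit]
        exact (abs_sum_le_sum_abs _ _).trans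
          (sum_le_sum fun a _ => abs_sum_le_sum_abs _ _)
    _ ≤ ∑ a, ∑ b, q a * p b * Dspread h := by
        gcongr with a _ b _
        rw [abs_mul, abs_of_nonneg (mul_nonneg (hq a) (hp b))]
        exact mul_le_mul_of_nonneg_left (abs_sub_le_Dspread h a b) (mul_nonneg (hq a) (hp b))
    _ = Dspread h := by simp [← sum_mul, ← mul_sum, hp1, hq1]

theorem fPE_single (h : Fin (K + 1) → ℝ) (a : Fin (K + 1)) : fPE h (Pi.single a 1) = h a := by
  simp [fPE, Pi.single_apply]

theorem abs_sub_fPE_le_Dspread (h : Fin (K + 1) → ℝ) {p : Fin (K + 1) → ℝ}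
    (hp : ∀ b, 0 ≤ p b) (hp1 : ∑ b, p b = 1) (a : Fin (K + 1)) :
    |h a - fPE h p| ≤ Dspread h := by
  rw [← fPE_single h a]
  refine abs_fPE_sub_fPE_le_Dspread h (fun b => ?_) (by simp) hp hp1
  rcases eq_or_ne b a with rfl | hb <;> simp [*]

theorem sum_mul_sub_fPE (h : Fin (K + 1) → ℝ) {p : Fin (K + 1) → ℝ} (hp1 : ∑ b, p b = 1) :
    ∑ a, p a * (h a - fPE h p) = 0 := by
  simp only [mul_sub, sum_sub_distrib, ← sum_mul, hp1, one_mul, fPE, mul_comm]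
  exact sub_self _

variable {n : ℕ}

theorem fPE_freq (h : Fin (K + 1) → ℝ) (ω : Fin n → Fin (K + 1)) :
    fPE h (freq ω) = (∑ j, h (ω j)) / n := by
  rw [fPE, ← sum_fiberwise univ ω (fun j => h (ω j)), sum_div]
  refine sum_congr rfl fun a _ => ?_
  rw [sum_congr rfl fun j hj => by rw [(mem_filter.mp hj).2], sum_const,
    nsmul_eq_mul, freq]
  ring

theorem freq_nonneg (ω : Fin n → Fin (K + 1)) (c : Fin (K + 1)) : 0 ≤ freq ω c := by
  unfold freq; positivity

theorem sum_freq (hn : 0 < n) (ω : Fin n → Fin (K + 1)) : ∑ c, freq ω c = 1 := by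
  have := fPE_freq (fun _ => (1 : ℝ)) ω
  simp only [fPE, one_mul, sum_const, card_univ, Fintype.card_fin, nsmul_eq_mul,
    mul_one] at this
  rw [this, div_self (Nat.cast_ne_zero.mpr hn.ne')]

theorem fPE_freq_sub_fPE (hn : 0 < n) (h p : Fin (K + 1) → ℝ) (ω : Fin n → Fin (K + 1)) :
    fPE h (freq ω) - fPE h p = (∑ j, (h (ω j) - fPE h p)) / n := by
  rw [fPE_freq, sum_sub_distrib, sum_const, card_univ, Fintype.card_fin,
    nsmul_eq_mul, sub_div, mul_div_cancel_left₀ _ (Nat.cast_ne_zero.mpr hn.ne')]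

end Statistic

section Tolerance

variable {K n : ℕ} {p0 : Fin (K + 1) → ℝ} {εc : ℝ}

theorem deltaTolPE_nonneg (h : Fin (K + 1) → ℝ) (hε0 : 0 < εc) (hε2 : εc ≤ 2) :
    0 ≤ deltaTolPE n p0 h εc := by
  have := Dspread_nonneg h
  have := Real.logb_nonneg one_lt_two ((one_le_div hε0).mpr hε2)
  unfold deltaTolPE
  positivity

theorem two_le_of_deltaTolPE_lt_Dspread (h : Fin (K + 1) → ℝ) (hn : 0 < n) (hε0 : 0 < εc)
    (hε1 : εc ≤ 1) (hδD : deltaTolPE n p0 h εc < Dspread h) : 2 ≤ n := by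
  by_contra hlt
  obtain rfl : n = 1 := by omega
  have hL : 1 ≤ Real.logb 2 (2 / εc) :=
    (Real.logb_self_eq_one one_lt_two).symm.le.trans
      (Real.logb_le_logb_of_le one_lt_two two_pos ((le_div_iff₀ hε0).mpr (by linarith)))
  have hδ : 3 * Dspread h / (1 : ℕ) * Real.logb 2 (2 / εc) ≤ deltaTolPE 1 p0 h εc :=
    le_add_of_nonneg_left (by positivity)
  rw [Nat.cast_one, div_one] at hδ
  nlinarith [Dspread_nonneg h]

theorem deltaTolPE_eq (hp0 : ∀ i, 0 ≤ p0 i) (hp1 : ∑ i, p0 i = 1) (h : Fin (K + 1) → ℝ) :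
    deltaTolPE n p0 h εc =
      2 * √(Real.logb 2 (n / εc) * ((∑ a, p0 a * (h a - fPE h p0) ^ 2) / n)) +
        3 * Dspread h / n * Real.logb 2 (2 / εc) := by
  rw [deltaTolPE, ← sum_div, sum_gammaCoef_mul_cCoef_sq hp0 hp1]

theorem two_mul_log_mul_Dspread_le (hp0 : ∀ i, 0 ≤ p0 i) (hp1 : ∑ i, p0 i = 1)
    (h : Fin (K + 1) → ℝ) (hn : 0 < n) (hε0 : 0 < εc) (hε2 : εc ≤ 2) :
    2 * Real.log (2 / εc) * Dspread h ≤ n * deltaTolPE n p0 h εc := by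
  have hlog := Real.log_le_logb_two ((one_le_div hε0).mpr hε2)
  have hlog0 := Real.log_nonneg ((one_le_div hε0).mpr hε2)
  have hD := Dspread_nonneg h
  have htail : n * (3 * Dspread h / n * Real.logb 2 (2 / εc)) =
      3 * Dspread h * Real.logb 2 (2 / εc) := by
    field_simp
  rw [deltaTolPE_eq hp0 hp1, mul_add, htail]
  nlinarith [Real.sqrt_nonneg (Real.logb 2 (n / εc) * ((∑ a, p0 a * (h a - fPE h p0) ^ 2) / n)),
    (Nat.cast_nonneg n : (0 : ℝ) ≤ n)]

theorem four_mul_log_mul_variance_le (hp0 : ∀ i, 0 ≤ p0 i) (hp1 : ∑ i, p0 i = 1)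
    (h : Fin (K + 1) → ℝ) (hn : 2 ≤ n) (hε0 : 0 < εc) (hε2 : εc ≤ 2) :
    4 * Real.log (2 / εc) * ∑ a, p0 a * (h a - fPE h p0) ^ 2 ≤ n * deltaTolPE n p0 h εc ^ 2 := by
  set v := ∑ a, p0 a * (h a - fPE h p0) ^ 2
  have hn' : (2 : ℝ) ≤ n := by exact_mod_cast hn
  have hv : 0 ≤ v := sum_nonneg fun a _ => mul_nonneg (hp0 a) (sq_nonneg _)
  have h2ε : 1 ≤ 2 / εc := (one_le_div hε0).mpr hε2
  have hlog : Real.log (2 / εc) ≤ Real.logb 2 (n / εc) :=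
    (Real.log_le_log (by positivity) (by gcongr)).trans
      (Real.log_le_logb_two (h2ε.trans (by gcongr)))
  have hL : 0 ≤ Real.logb 2 (n / εc) := (Real.log_nonneg h2ε).trans hlog
  have hsqrt : n * (2 * √(Real.logb 2 (n / εc) * (v / n))) ^ 2 = 4 * Real.logb 2 (n / εc) * v := by
    rw [mul_pow, Real.sq_sqrt (by positivity)]
    field_simp
    ring
  have htail : 0 ≤ 3 * Dspread h / n * Real.logb 2 (2 / εc) :=
    mul_nonneg (div_nonneg (by linarith [Dspread_nonneg h]) (by positivity))
      (Real.logb_nonneg one_lt_two h2ε)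
  rw [deltaTolPE_eq hp0 hp1]
  calc 4 * Real.log (2 / εc) * v ≤ 4 * Real.logb 2 (n / εc) * v := by gcongr
    _ = n * (2 * √(Real.logb 2 (n / εc) * (v / n))) ^ 2 := hsqrt.symm
    _ ≤ _ := by gcongr; exact le_add_of_nonneg_right htail

end Tolerance

/-- Completeness of the parameter-estimation test: in an honest i.i.d. implementation
with distribution `p₀`, the probability that
`|f^PE(freq) − f^PE(p₀)| > δ^tol_PE` is at most `ε_c`; hence the probability of
aborting at parameter estimation (`f^PE(freq) < f^PE(p₀) − δ^tol_PE`) is at most `ε_c`. -/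
theorem parameter_estimation_completeness {K n : ℕ} (hn : 0 < n)
    (p0 : Fin (K + 1) → ℝ) (hp0 : ∀ i, 0 ≤ p0 i) (hp1 : ∑ i, p0 i = 1)
    (h : Fin (K + 1) → ℝ) (εc : ℝ) (hεc0 : 0 < εc) (hεc1 : εc < 1) :
    iidPr (n := n) p0 (fun ω =>
        |fPE h (freq ω) - fPE h p0| > deltaTolPE (K := K) n p0 h εc) ≤ εc ∧
    iidPr (n := n) p0 (fun ω =>
        fPE h (freq ω) < fPE h p0 - deltaTolPE (K := K) n p0 h εc) ≤ εc := by
  set δ := deltaTolPE n p0 h εc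
  have hε2 : εc ≤ 2 := by linarith
  have habs : iidPr p0 (fun ω : Fin n → Fin (K + 1) => |fPE h (freq ω) - fPE h p0| > δ) ≤ εc := by
    by_cases hDδ : Dspread h ≤ δ
    · refine (iidPr_of_forall_not fun ω hω => ?_).trans_le hεc0.le
      linarith [abs_fPE_sub_fPE_le_Dspread h (freq_nonneg ω) (sum_freq hn ω) hp0 hp1]
    have hδD : δ < Dspread h := not_le.mp hDδ
    have hn2 : 2 ≤ n := two_le_of_deltaTolPE_lt_Dspread h hn hεc0 hεc1.le hδD
    calc _ ≤ iidPr p0 (fun ω : Fin n → Fin (K + 1) => n * δ < |∑ j, (h (ω j) - fPE h p0)|) :=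
          iidPr_mono hp0 fun ω hω => by
            rwa [gt_iff_lt, fPE_freq_sub_fPE hn, abs_div, Nat.abs_cast,
              lt_div_iff₀' (by positivity)] at hω
      _ ≤ 2 * Real.exp (-Real.log (2 / εc)) :=
          iidPr_lt_abs_sum_le hp0 hp1 (sum_mul_sub_fPE h hp1)
            ((deltaTolPE_nonneg h hεc0 hε2).trans_lt hδD)
            (Real.log_pos ((lt_div_iff₀ hεc0).mpr (by linarith)))
            (abs_sub_fPE_le_Dspread h hp0 hp1)
            (four_mul_log_mul_variance_le hp0 hp1 h hn2 hεc0 hε2)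
            (two_mul_log_mul_Dspread_le hp0 hp1 h hn hεc0 hε2)
      _ = εc := by rw [Real.exp_neg, Real.exp_log (by positivity)]; field_simp
  exact ⟨habs, (iidPr_mono hp0 fun ω hω => by
    linarith [neg_abs_le (fPE h (freq ω) - fPE h p0)]).trans habs⟩

end
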